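/- Replaceability for the PSub(k,p) upper bounds: let p ∈ {k+1,…,n} and let v : {1,…,k} → {1,…,n} be an arbitrary assignment of target outcome values. Then: (i) P(⋂_{j=1}^{k} {Y_j = v(j)} ∩ {X = p}) ≤ P(X = p); and (ii) for every j ∈ {1,…,k}, P(⋂_{j=1}^{k} {Y_j = v(j)} ∩ {X = p}) ≤ P(Y_j = v(j)) − P(X = j, Y = v(j)). -/

import Mathlib

/-!
For `j ≤ k < p`, the event `⋂ {Y_j = v j} ∩ {X = p}` and the event `{X = j, Y = v j}` are
disjoint, and both lie inside `{Y_j = v j}`: the first trivially, the second by consistency,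
which identifies it with `{X = j} ∩ {Y_j = v j}`. Additivity of `P` on disjoint events gives (ii).
-/

open MeasureTheory

theorem measureReal_add_le_of_disjoint {Ω : Type*} [MeasurableSpace Ω] {μ : Measure Ω}
    [IsFiniteMeasure μ] {A B C : Set Ω} (hB : MeasurableSet B) (hAB : Disjoint A B)
    (hAC : A ⊆ C) (hBC : B ⊆ C) : μ.real A + μ.real B ≤ μ.real C := by
  rw [← measureReal_union hAB hB]
  exact measureReal_mono (Set.union_subset hAC hBC)

theorem setOf_treatment_and_observed_eq {Ω ι α : Type*} {X : Ω → ι} {Y : ι → Ω → α}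
    {Yobs : Ω → α} (hcons : ∀ ω, Yobs ω = Y (X ω) ω) (j : ι) (a : α) :
    {ω | X ω = j ∧ Yobs ω = a} = {ω | X ω = j} ∩ {ω | Y j ω = a} := by
  ext ω
  simp only [Set.mem_inter_iff, Set.mem_ofPred_eq, hcons]
  exact and_congr_right fun hX => by rw [hX]

theorem psub_kp_upper_bounds_replaceability_general
    {Ω : Type*} [MeasurableSpace Ω] (P : Measure Ω) [IsProbabilityMeasure P]
    (n k : ℕ)
    (X : Ω → ℕ) (Y : ℕ → Ω → ℕ) (Yobs : Ω → ℕ)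
    (hX : Measurable X) (hY : ∀ j, Measurable (Y j))
    (hcons : ∀ ω, Yobs ω = Y (X ω) ω)
    (p : ℕ) (hp : p ∈ Finset.Icc (k+1) n)
    (v : ℕ → ℕ) :
    (P ((⋂ j ∈ Finset.Icc 1 k, {ω | Y j ω = v j}) ∩ {ω | X ω = p})).toReal ≤ (P {ω | X ω = p}).toReal ∧
    ∀ j ∈ Finset.Icc 1 k, (P ((⋂ j ∈ Finset.Icc 1 k, {ω | Y j ω = v j}) ∩ {ω | X ω = p})).toReal ≤ (P {ω | Y j ω = v j}).toReal - (P {ω | X ω = j ∧ Yobs ω = v j}).toReal := by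
  set A := (⋂ j ∈ Finset.Icc 1 k, {ω | Y j ω = v j}) ∩ {ω | X ω = p}
  refine ⟨measureReal_mono Set.inter_subset_right, fun j hj => ?_⟩
  rw [setOf_treatment_and_observed_eq hcons]
  have hjp : j ≠ p := by grind
  have hadd : P.real A + P.real ({ω | X ω = j} ∩ {ω | Y j ω = v j}) ≤ P.real {ω | Y j ω = v j} :=
    measureReal_add_le_of_disjoint
      ((hX (measurableSet_singleton j)).inter (hY j (measurableSet_singleton (v j))))
      (Set.disjoint_left.2 fun ω hA hB => hjp (hB.1.symm.trans hA.2))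
      (Set.inter_subset_left.trans (Set.iInter₂_subset j hj)) Set.inter_subset_right
  exact le_sub_iff_add_le.2 hadd

theorem psub_kp_upper_bounds_replaceability
    {Ω : Type*} [MeasurableSpace Ω] (P : Measure Ω) [IsProbabilityMeasure P]
    (n k : ℕ) (hk1 : 1 ≤ k) (hkn : k ≤ n)
    (X : Ω → ℕ) (Y : ℕ → Ω → ℕ) (Yobs : Ω → ℕ)
    (hX : Measurable X) (hY : ∀ j, Measurable (Y j))
    (hXr : ∀ ω, X ω ∈ Finset.Icc 1 n)
    (hYr : ∀ j ω, Y j ω ∈ Finset.Icc 1 n)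
    (hcons : ∀ ω, Yobs ω = Y (X ω) ω)
    (p : ℕ) (hp : p ∈ Finset.Icc (k+1) n)
    (v : ℕ → ℕ) (hv : ∀ j ∈ Finset.Icc 1 k, v j ∈ Finset.Icc 1 n) :
    (P ((⋂ j ∈ Finset.Icc 1 k, {ω | Y j ω = v j}) ∩ {ω | X ω = p})).toReal ≤ (P {ω | X ω = p}).toReal ∧
    ∀ j ∈ Finset.Icc 1 k, (P ((⋂ j ∈ Finset.Icc 1 k, {ω | Y j ω = v j}) ∩ {ω | X ω = p})).toReal ≤ (P {ω | Y j ω = v j}).toReal - (P {ω | X ω = j ∧ Yobs ω = v j}).toReal :=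
  psub_kp_upper_bounds_replaceability_general P n k X Y Yobs hX hY hcons p hp v
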